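/- arXiv:0906.3258 — 8 statements merged into one kernel-verified Lean document; each statement's English description precedes it below -/
import Mathlib

section
/- Let X and C be types, r a positive natural number, L : X → C → C → Matrix (2×2, or r×r over ℂ) a family of matrices L(x; α, λ), and R a family of maps R_{(α₁,α₂)} : X × X → X × X. Assume (strong Lax property): for all α₁, α₂ ∈ C and x₁, x₂, x₁', x₂' ∈ X, R_{(α₁,α₂)}(x₁,x₂) = (x₁',x₂') holds if and only if L(x₂; α₂, λ) · L(x₁; α₁, λ) = L(x₁'; α₁, λ) · L(x₂'; α₂, λ) for all λ ∈ C. Assume further (3-factorization property): for all α₁, α₂, α₃ ∈ C and x₁, x₂, x₃, x₁', x₂', x₃' ∈ X, if L(x₃'; α₃, λ) · L(x₂'; α₂, λ) · L(x₁'; α₁, λ) = L(x₃; α₃, λ) · L(x₂; α₂, λ) · L(x₁; α₁, λ) for all λ ∈ C, then x₁' = x₁, x₂' = x₂, x₃' = x₃. Then the family R satisfies the parametric Yang–Baxter equation: for all α₁, α₂, α₃ ∈ C, R^{(2,3)}_{(α₂,α₃)} ∘ R^{(1,3)}_{(α₁,α₃)} ∘ R^{(1,2)}_{(α₁,α₂)}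 = R^{(1,2)}_{(α₁,α₂)} ∘ R^{(1,3)}_{(α₁,α₃)} ∘ R^{(2,3)}_{(α₂,α₃)} as maps X³ → X³. -/
/-- `R` acting on factors (1,2) of `X³` and as the identity on the third. -/
def act12 {X : Type*} (R : X × X → X × X) : X × X × X → X × X × X :=
  fun p => ((R (p.1, p.2.1)).1, (R (p.1, p.2.1)).2, p.2.2)

/-- `R` acting on factors (1,3) of `X³` and as the identity on the second. -/
def act13 {X : Type*} (R : X × X → X × X) : X × X × X → X × X × X :=
  fun p => ((R (p.1, p.2.2)).1, p.2.1, (R (p.1, p.2.2)).2)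

/-- `R` acting on factors (2,3) of `X³` and as the identity on the first. -/
def act23 {X : Type*} (R : X × X → X × X) : X × X × X → X × X × X :=
  fun p => (p.1, (R (p.2.1, p.2.2)).1, (R (p.2.1, p.2.2)).2)

section Lax

variable {X C M : Type*} [Monoid M]

def IsLaxMatrix (ℓ : C → X → M) (R : C → C → X × X → X × X) : Prop :=
  ∀ (α β : C) (x y : X), ℓ β y * ℓ α x = ℓ α (R α β (x, y)).1 * ℓ β (R α β (x, y)).2

def tripleProd (ℓ : C → X → M) (α₁ α₂ α₃ : C) (p : X × X × X) : M :=
  ℓ α₁ p.1 * ℓ α₂ p.2.1 * ℓ α₃ p.2.2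

namespace IsLaxMatrix

variable {ℓ : C → X → M} {R : C → C → X × X → X × X}

theorem mul_eq_tripleProd_act23_act13_act12 (h : IsLaxMatrix ℓ R) (α₁ α₂ α₃ : C)
    (p : X × X × X) :
    ℓ α₃ p.2.2 * ℓ α₂ p.2.1 * ℓ α₁ p.1 =
      tripleProd ℓ α₁ α₂ α₃ ((act23 (R α₂ α₃) ∘ act13 (R α₁ α₃) ∘ act12 (R α₁ α₂)) p) := by
  obtain ⟨x₁, x₂, x₃⟩ := p
  simp only [tripleProd, act12, act13, act23, Function.comp_apply]
  rw [mul_assoc, h α₁ α₂ x₁ x₂, ← mul_assoc, h α₁ α₃, mul_assoc, h α₂ α₃, ← mul_assoc]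

theorem mul_eq_tripleProd_act12_act13_act23 (h : IsLaxMatrix ℓ R) (α₁ α₂ α₃ : C)
    (p : X × X × X) :
    ℓ α₃ p.2.2 * ℓ α₂ p.2.1 * ℓ α₁ p.1 =
      tripleProd ℓ α₁ α₂ α₃ ((act12 (R α₁ α₂) ∘ act13 (R α₁ α₃) ∘ act23 (R α₂ α₃)) p) := by
  obtain ⟨x₁, x₂, x₃⟩ := p
  simp only [tripleProd, act12, act13, act23, Function.comp_apply]
  rw [h α₂ α₃ x₂ x₃, mul_assoc, h α₁ α₃ x₁, ← mul_assoc, h α₁ α₂]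

/-- Both sides of the Yang–Baxter equation refactorize `ℓ α₃ x₃ * ℓ α₂ x₂ * ℓ α₁ x₁` in the
order `α₁, α₂, α₃`, so they agree as soon as that refactorization is unique. -/
theorem yangBaxter (h : IsLaxMatrix ℓ R) {α₁ α₂ α₃ : C}
    (hinj : Function.Injective (tripleProd ℓ α₁ α₂ α₃)) :
    act23 (R α₂ α₃) ∘ act13 (R α₁ α₃) ∘ act12 (R α₁ α₂) =
      act12 (R α₁ α₂) ∘ act13 (R α₁ α₃) ∘ act23 (R α₂ α₃) :=
  funext fun p => hinj <| (h.mul_eq_tripleProd_act23_act13_act12 α₁ α₂ α₃ p).symm.trans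
    (h.mul_eq_tripleProd_act12_act13_act23 α₁ α₂ α₃ p)

end IsLaxMatrix

end Lax

theorem yangBaxter_of_strongLax_threeFactorization_general
    {X C : Type*} (r : ℕ)
    (L : X → C → C → Matrix (Fin r) (Fin r) ℂ)
    (R : C → C → X × X → X × X)
    (strongLax : ∀ (α₁ α₂ : C) (x₁ x₂ x₁' x₂' : X),
      R α₁ α₂ (x₁, x₂) = (x₁', x₂') ↔
        ∀ lam : C, L x₂ α₂ lam * L x₁ α₁ lam = L x₁' α₁ lam * L x₂' α₂ lam)
    (threeFact : ∀ (α₁ α₂ α₃ : C) (x₁ x₂ x₃ x₁' x₂' x₃' : X),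
      (∀ lam : C,
        L x₃' α₃ lam * L x₂' α₂ lam * L x₁' α₁ lam =
          L x₃ α₃ lam * L x₂ α₂ lam * L x₁ α₁ lam) →
        x₁' = x₁ ∧ x₂' = x₂ ∧ x₃' = x₃) :
    ∀ α₁ α₂ α₃ : C,
      act23 (R α₂ α₃) ∘ act13 (R α₁ α₃) ∘ act12 (R α₁ α₂) =
        act12 (R α₁ α₂) ∘ act13 (R α₁ α₃) ∘ act23 (R α₂ α₃) := by
  intro α₁ α₂ α₃
  let ℓ : C → X → C → Matrix (Fin r) (Fin r) ℂ := fun α x lam => L x α lam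
  have lax : IsLaxMatrix ℓ R := fun α β x y => funext ((strongLax α β x y _ _).mp rfl)
  refine lax.yangBaxter fun q q' hqq' => ?_
  obtain ⟨h₃, h₂, h₁⟩ :=
    threeFact α₃ α₂ α₁ q'.2.2 q'.2.1 q'.1 q.2.2 q.2.1 q.1 (congrFun hqq')
  exact Prod.ext h₁ (Prod.ext h₂ h₃)

/-- A parametric family of maps with a strong Lax matrix satisfying the
3-factorization property satisfies the parametric Yang–Baxter equation. -/
theorem yangBaxter_of_strongLax_threeFactorization
    {X C : Type*} (r : ℕ) (hr : 0 < r)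
    (L : X → C → C → Matrix (Fin r) (Fin r) ℂ)
    (R : C → C → X × X → X × X)
    (strongLax : ∀ (α₁ α₂ : C) (x₁ x₂ x₁' x₂' : X),
      R α₁ α₂ (x₁, x₂) = (x₁', x₂') ↔
        ∀ lam : C, L x₂ α₂ lam * L x₁ α₁ lam = L x₁' α₁ lam * L x₂' α₂ lam)
    (threeFact : ∀ (α₁ α₂ α₃ : C) (x₁ x₂ x₃ x₁' x₂' x₃' : X),
      (∀ lam : C,
        L x₃' α₃ lam * L x₂' α₂ lam * L x₁' α₁ lam =
          L x₃ α₃ lam * L x₂ α₂ lam * L x₁ α₁ lam) →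
        x₁' = x₁ ∧ x₂' = x₂ ∧ x₃' = x₃) :
    ∀ α₁ α₂ α₃ : C,
      act23 (R α₂ α₃) ∘ act13 (R α₁ α₃) ∘ act12 (R α₁ α₂) =
        act12 (R α₁ α₂) ∘ act13 (R α₁ α₃) ∘ act23 (R α₂ α₃) :=
  yangBaxter_of_strongLax_threeFactorization_general r L R strongLax threeFact
end

section
/- Let X and C be types, L : X → C → C → Matrix (r×r over ℂ) a family of matrices L(x; α, λ), and R a family of maps R_{(α₁,α₂)} : X × X → X × X. Assume (strong Lax property): for all α₁, α₂ ∈ C and x₁, x₂, x₁', x₂' ∈ X, R_{(α₁,α₂)}(x₁,x₂) = (x₁',x₂') holds if and only if L(x₂; α₂, λ) · L(x₁; α₁, λ) = L(x₁'; α₁, λ) · L(x₂'; α₂, λ) for all λ ∈ C. Assume further (2-factorization property): for all α₁, α₂ ∈ C and x₁, x₂, x₁', x₂' ∈ X, if L(x₂'; α₂, λ) · L(x₁'; α₁, λ) = L(x₂; α₂, λ) · L(x₁; α₁, λ) for all λ ∈ C, then x₁' = x₁ and x₂' = x₂. Then the family R is unitary: for all α₁, α₂ ∈ C and x₁, x₂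 ∈ X, if R_{(α₁,α₂)}(x₁,x₂) = (x₁',x₂') and R_{(α₂,α₁)}(x₂',x₁') = (x₂'',x₁''), then (x₁'',x₂'') = (x₁,x₂). -/
theorem unitary_of_strongLax_twoFactorization_general
    {X C : Type*} (r : ℕ)
    (L : X → C → C → Matrix (Fin r) (Fin r) ℂ)
    (R : C → C → X × X → X × X)
    (strongLax : ∀ (α₁ α₂ : C) (x₁ x₂ x₁' x₂' : X),
      R α₁ α₂ (x₁, x₂) = (x₁', x₂') ↔
        ∀ lam : C, L x₂ α₂ lam * L x₁ α₁ lam = L x₁' α₁ lam * L x₂' α₂ lam)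
    (twoFact : ∀ (α₁ α₂ : C) (x₁ x₂ x₁' x₂' : X),
      (∀ lam : C,
        L x₂' α₂ lam * L x₁' α₁ lam = L x₂ α₂ lam * L x₁ α₁ lam) →
        x₁' = x₁ ∧ x₂' = x₂) :
    ∀ (α₁ α₂ : C) (x₁ x₂ x₁' x₂' x₁'' x₂'' : X),
      R α₁ α₂ (x₁, x₂) = (x₁', x₂') →
      R α₂ α₁ (x₂', x₁') = (x₂'', x₁'') →
      (x₁'', x₂'') = (x₁, x₂) := by
  intro α₁ α₂ x₁ x₂ x₁' x₂' x₁'' x₂'' h₁ h₂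
  have hLax : ∀ lam : C,
      L x₂'' α₂ lam * L x₁'' α₁ lam = L x₂ α₂ lam * L x₁ α₁ lam := fun lam =>
    calc L x₂'' α₂ lam * L x₁'' α₁ lam = L x₁' α₁ lam * L x₂' α₂ lam :=
          ((strongLax _ _ _ _ _ _).1 h₂ lam).symm
      _ = L x₂ α₂ lam * L x₁ α₁ lam := ((strongLax _ _ _ _ _ _).1 h₁ lam).symm
  obtain ⟨rfl, rfl⟩ := twoFact α₁ α₂ x₁ x₂ x₁'' x₂'' hLax
  rfl

/-- A parametric family of maps with a strong Lax matrix satisfying the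
2-factorization property is unitary. -/
theorem unitary_of_strongLax_twoFactorization
    {X C : Type*} (r : ℕ) (hr : 0 < r)
    (L : X → C → C → Matrix (Fin r) (Fin r) ℂ)
    (R : C → C → X × X → X × X)
    (strongLax : ∀ (α₁ α₂ : C) (x₁ x₂ x₁' x₂' : X),
      R α₁ α₂ (x₁, x₂) = (x₁', x₂') ↔
        ∀ lam : C, L x₂ α₂ lam * L x₁ α₁ lam = L x₁' α₁ lam * L x₂' α₂ lam)
    (twoFact : ∀ (α₁ α₂ : C) (x₁ x₂ x₁' x₂' : X),
      (∀ lam : C,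
        L x₂' α₂ lam * L x₁' α₁ lam = L x₂ α₂ lam * L x₁ α₁ lam) →
        x₁' = x₁ ∧ x₂' = x₂) :
    ∀ (α₁ α₂ : C) (x₁ x₂ x₁' x₂' x₁'' x₂'' : X),
      R α₁ α₂ (x₁, x₂) = (x₁', x₂') →
      R α₂ α₁ (x₂', x₁') = (x₂'', x₁'') →
      (x₁'', x₂'') = (x₁, x₂) :=
  unitary_of_strongLax_twoFactorization_general r L R strongLax twoFact
end

section
/- The Adler map family R_{(a,b)}(u,v) = (v + (a−b)/(u+v), u − (a−b)/(u+v)) on ℂ × ℂ satisfies the parametric Yang–Baxter equation: for all parameters a₁, a₂, a₃ ∈ ℂ and all (x₁, x₂, x₃) ∈ ℂ³ such that every denominator encountered in evaluating both compositions R^{(2,3)}_{(a₂,a₃)} ∘ R^{(1,3)}_{(a₁,a₃)} ∘ R^{(1,2)}_{(a₁,a₂)} and R^{(1,2)}_{(a₁,a₂)} ∘ R^{(1,3)}_{(a₁,a₃)} ∘ R^{(2,3)}_{(a₂,a₃)} at (x₁,x₂,x₃) is nonzero, the two compositions give the same value at (x₁, x₂, x₃). -/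
/-- The Adler map `R_{(a,b)}(u,v) = (v + (a−b)/(u+v), u − (a−b)/(u+v))`. -/
noncomputable def adler (a b : ℂ) : ℂ × ℂ → ℂ × ℂ :=
  fun p => (p.2 + (a - b) / (p.1 + p.2), p.1 - (a - b) / (p.1 + p.2))

section Triple

variable {X : Type*}

def tripleSum [Add X] (p : X × X × X) : X := p.1 + p.2.1 + p.2.2

theorem triple_ext_of_tripleSum_eq [AddCancelMonoid X] {p q : X × X × X} (h₁ : p.1 = q.1)
    (h₃ : p.2.2 = q.2.2) (hsum : tripleSum p = tripleSum q) : p = q := by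
  unfold tripleSum at hsum
  rw [h₁, h₃] at hsum
  exact Prod.ext h₁ (Prod.ext (add_left_cancel (add_right_cancel hsum)) h₃)

variable [AddCommMonoid X] {R : X × X → X × X} (hR : ∀ p, (R p).1 + (R p).2 = p.1 + p.2)
include hR

theorem tripleSum_act12 (p : X × X × X) : tripleSum (act12 R p) = tripleSum p := by
  simp only [tripleSum, act12, hR]

theorem tripleSum_act13 (p : X × X × X) : tripleSum (act13 R p) = tripleSum p := by
  have := hR (p.1, p.2.2)
  simp only [tripleSum, act13] at this ⊢
  rw [add_right_comm, this, add_right_comm]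

theorem tripleSum_act23 (p : X × X × X) : tripleSum (act23 R p) = tripleSum p := by
  simp only [tripleSum, act23, add_assoc, hR]

end Triple

section Adler

variable (a b u v w : ℂ)

theorem adler_fst_add_snd (p : ℂ × ℂ) : (adler a b p).1 + (adler a b p).2 = p.1 + p.2 := by
  simp only [adler]
  ring

variable {u v}

theorem adler_fst_add (h : u + v ≠ 0) :
    (adler a b (u, v)).1 + w = ((u + v) * (v + w) + (a - b)) / (u + v) := by
  simp only [adler]
  field_simp
  ring

theorem add_adler_snd (h : u + v ≠ 0) :
    w + (adler a b (u, v)).2 = ((w + u) * (u + v) - (a - b)) / (u + v) := by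
  simp only [adler]
  field_simp
  ring

end Adler

section YangBaxter

variable (a₁ a₂ a₃ : ℂ) {x₁ x₂ x₃ : ℂ}

theorem act23_act13_act12_adler_fst (hs : x₁ + x₂ ≠ 0) :
    (act23 (adler a₂ a₃) (act13 (adler a₁ a₃) (act12 (adler a₁ a₂) (x₁, x₂, x₃)))).1 =
      x₃ + (a₁ - a₃) * (x₁ + x₂) / ((x₁ + x₂) * (x₂ + x₃) + (a₁ - a₂)) := by
  show x₃ + (a₁ - a₃) / ((adler a₁ a₂ (x₁, x₂)).1 + x₃) = _
  rw [adler_fst_add _ _ _ hs, div_div_eq_mul_div]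

theorem act13_act12_adler_snd_fst_add_snd_snd (hs : x₁ + x₂ ≠ 0)
    (hD : (x₁ + x₂) * (x₂ + x₃) + (a₁ - a₂) ≠ 0) :
    (act13 (adler a₁ a₃) (act12 (adler a₁ a₂) (x₁, x₂, x₃))).2.1 +
        (act13 (adler a₁ a₃) (act12 (adler a₁ a₂) (x₁, x₂, x₃))).2.2 =
      (x₁ + x₂) * ((x₁ + x₂) * (x₂ + x₃) - (a₂ - a₃)) / ((x₁ + x₂) * (x₂ + x₃) + (a₁ - a₂)) := by
  have hP := adler_fst_add a₁ a₂ x₃ hs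
  simp only [act12, act13, adler] at hP ⊢
  rw [hP, div_div_eq_mul_div]
  calc _ = (x₁ + x₂) - (a₁ - a₃) * (x₁ + x₂) / ((x₁ + x₂) * (x₂ + x₃) + (a₁ - a₂)) := by ring
    _ = _ := by rw [eq_div_iff hD, sub_mul, div_mul_cancel₀ _ hD]; ring

theorem act23_act13_act12_adler_snd_snd (hs : x₁ + x₂ ≠ 0)
    (hD : (x₁ + x₂) * (x₂ + x₃) + (a₁ - a₂) ≠ 0) :
    (act23 (adler a₂ a₃) (act13 (adler a₁ a₃) (act12 (adler a₁ a₂) (x₁, x₂, x₃)))).2.2 =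
      x₁ - (a₁ - a₂) / (x₁ + x₂) - (a₂ - a₃) * ((x₁ + x₂) * (x₂ + x₃) + (a₁ - a₂)) /
        ((x₁ + x₂) * ((x₁ + x₂) * (x₂ + x₃) - (a₂ - a₃))) := by
  show _ - (a₂ - a₃) / (_ + _) = _
  rw [act13_act12_adler_snd_fst_add_snd_snd a₁ a₂ a₃ hs hD, div_div_eq_mul_div]
  rfl

theorem act13_act23_adler_fst_add_snd_fst (hr : x₂ + x₃ ≠ 0)
    (hE : (x₁ + x₂) * (x₂ + x₃) - (a₂ - a₃) ≠ 0) :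
    (act13 (adler a₁ a₃) (act23 (adler a₂ a₃) (x₁, x₂, x₃))).1 +
        (act13 (adler a₁ a₃) (act23 (adler a₂ a₃) (x₁, x₂, x₃))).2.1 =
      (x₂ + x₃) * ((x₁ + x₂) * (x₂ + x₃) + (a₁ - a₂)) / ((x₁ + x₂) * (x₂ + x₃) - (a₂ - a₃)) := by
  have hQ := add_adler_snd a₂ a₃ x₁ hr
  simp only [act13, act23, adler] at hQ ⊢
  rw [hQ, div_div_eq_mul_div]
  calc _ = (x₂ + x₃) + (a₁ - a₃) * (x₂ + x₃) / ((x₁ + x₂) * (x₂ + x₃) - (a₂ - a₃)) := by ring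
    _ = _ := by rw [eq_div_iff hE, add_mul, div_mul_cancel₀ _ hE]; ring

theorem act12_act13_act23_adler_fst (hr : x₂ + x₃ ≠ 0)
    (hE : (x₁ + x₂) * (x₂ + x₃) - (a₂ - a₃) ≠ 0) :
    (act12 (adler a₁ a₂) (act13 (adler a₁ a₃) (act23 (adler a₂ a₃) (x₁, x₂, x₃)))).1 =
      x₃ + (a₂ - a₃) / (x₂ + x₃) + (a₁ - a₂) * ((x₁ + x₂) * (x₂ + x₃) - (a₂ - a₃)) /
        ((x₂ + x₃) * ((x₁ + x₂) * (x₂ + x₃) + (a₁ - a₂))) := by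
  show _ + (a₁ - a₂) / (_ + _) = _
  rw [act13_act23_adler_fst_add_snd_fst a₁ a₂ a₃ hr hE, div_div_eq_mul_div]
  rfl

theorem act12_act13_act23_adler_snd_snd (hr : x₂ + x₃ ≠ 0) :
    (act12 (adler a₁ a₂) (act13 (adler a₁ a₃) (act23 (adler a₂ a₃) (x₁, x₂, x₃)))).2.2 =
      x₁ - (a₁ - a₃) * (x₂ + x₃) / ((x₁ + x₂) * (x₂ + x₃) - (a₂ - a₃)) := by
  show x₁ - (a₁ - a₃) / (x₁ + (adler a₂ a₃ (x₂, x₃)).2) = _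
  rw [add_adler_snd _ _ _ hr, div_div_eq_mul_div]

end YangBaxter

theorem adler_yangBaxter_general (a₁ a₂ a₃ x₁ x₂ x₃ : ℂ)
    (p1 p2 q1 q2 : ℂ × ℂ × ℂ)
    (hp1 : p1 = act12 (adler a₁ a₂) (x₁, x₂, x₃))
    (hp2 : p2 = act13 (adler a₁ a₃) p1)
    (hq1 : q1 = act23 (adler a₂ a₃) (x₁, x₂, x₃))
    (hq2 : q2 = act13 (adler a₁ a₃) q1)
    (h1 : x₁ + x₂ ≠ 0)
    (h2 : p1.1 + p1.2.2 ≠ 0)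
    (h4 : x₂ + x₃ ≠ 0)
    (h5 : q1.1 + q1.2.2 ≠ 0) :
    act23 (adler a₂ a₃) p2 = act12 (adler a₁ a₂) q2 := by
  subst hp1 hp2 hq1 hq2
  have hD : (x₁ + x₂) * (x₂ + x₃) + (a₁ - a₂) ≠ 0 := fun h =>
    h2 ((adler_fst_add a₁ a₂ x₃ h1).trans (by rw [h, zero_div]))
  have hE : (x₁ + x₂) * (x₂ + x₃) - (a₂ - a₃) ≠ 0 := fun h =>
    h5 ((add_adler_snd a₂ a₃ x₁ h4).trans (by rw [h, zero_div]))
  apply triple_ext_of_tripleSum_eq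
  · rw [act23_act13_act12_adler_fst _ _ _ h1, act12_act13_act23_adler_fst _ _ _ h4 hE]
    field_simp
    ring
  · rw [act23_act13_act12_adler_snd_snd _ _ _ h1 hD, act12_act13_act23_adler_snd_snd _ _ _ h4]
    field_simp
    ring
  · simp only [tripleSum_act12 (adler_fst_add_snd _ _), tripleSum_act13 (adler_fst_add_snd _ _),
      tripleSum_act23 (adler_fst_add_snd _ _)]

/-- The Adler map family satisfies the parametric Yang–Baxter equation wherever
all denominators encountered in both compositions are nonzero. -/
theorem adler_yangBaxter (a₁ a₂ a₃ x₁ x₂ x₃ : ℂ)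
    (p1 p2 q1 q2 : ℂ × ℂ × ℂ)
    (hp1 : p1 = act12 (adler a₁ a₂) (x₁, x₂, x₃))
    (hp2 : p2 = act13 (adler a₁ a₃) p1)
    (hq1 : q1 = act23 (adler a₂ a₃) (x₁, x₂, x₃))
    (hq2 : q2 = act13 (adler a₁ a₃) q1)
    (h1 : x₁ + x₂ ≠ 0)
    (h2 : p1.1 + p1.2.2 ≠ 0)
    (h3 : p2.2.1 + p2.2.2 ≠ 0)
    (h4 : x₂ + x₃ ≠ 0)
    (h5 : q1.1 + q1.2.2 ≠ 0)
    (h6 : q2.1 + q2.2.1 ≠ 0) :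
    act23 (adler a₂ a₃) p2 = act12 (adler a₁ a₂) q2 :=
  adler_yangBaxter_general a₁ a₂ a₃ x₁ x₂ x₃ p1 p2 q1 q2 hp1 hp2 hq1 hq2 h1 h2 h4 h5
end

section
/- The map family R_{(α₁,α₂)}(x,y) = ( y(α₁ + xy)/(α₂ + xy), x(α₂ + xy)/(α₁ + xy) ) on ℂ × ℂ satisfies the parametric Yang–Baxter equation: for all parameters α₁, α₂, α₃ ∈ ℂ and all (x₁, x₂, x₃) ∈ ℂ³ such that every denominator encountered in evaluating both compositions R^{(2,3)}_{(α₂,α₃)} ∘ R^{(1,3)}_{(α₁,α₃)} ∘ R^{(1,2)}_{(α₁,α₂)} and R^{(1,2)}_{(α₁,α₂)} ∘ R^{(1,3)}_{(α₁,α₃)} ∘ R^{(2,3)}_{(α₂,α₃)} at (x₁,x₂,x₃) is nonzero, the two compositions give the same value at (x₁, x₂, x₃). -/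
/-- The map `R_{(α₁,α₂)}(x,y) = ( y(α₁+xy)/(α₂+xy), x(α₂+xy)/(α₁+xy) )`. -/
noncomputable def fIII (α₁ α₂ : ℂ) : ℂ × ℂ → ℂ × ℂ :=
  fun p => (p.2 * (α₁ + p.1 * p.2) / (α₂ + p.1 * p.2),
            p.1 * (α₂ + p.1 * p.2) / (α₁ + p.1 * p.2))

/-- The denominators encountered in applying `fIII α₁ α₂` at a point are nonzero. -/
def fIIIok (α₁ α₂ : ℂ) (p : ℂ × ℂ) : Prop :=
  α₁ + p.1 * p.2 ≠ 0 ∧ α₂ + p.1 * p.2 ≠ 0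

theorem fIII_eq_of_mul_eq_div {α β x y n d : ℂ} (hd : d ≠ 0) (h : x * y = n / d) :
    fIII α β (x, y) = (y * (α * d + n) / (β * d + n), x * (β * d + n) / (α * d + n)) := by
  simp only [fIII, h, add_div' _ _ _ hd, mul_div_assoc, div_div_div_cancel_right₀ hd]

theorem fIII_swap (α β : ℂ) : Prod.swap ∘ fIII α β ∘ Prod.swap = fIII β α := by
  funext p
  simp only [Function.comp_apply, Prod.swap, fIII, mul_comm p.2 p.1]

theorem fIIIok_swap {α β : ℂ} {p : ℂ × ℂ} : fIIIok β α p.swap ↔ fIIIok α β p := by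
  simp only [fIIIok, Prod.fst_swap, Prod.snd_swap, mul_comm p.2 p.1, and_comm]

/-- `(β + a) (κ + b (α + a) / (β + a))`: with `a = x₁ x₂`, `b = x₂ x₃`, the denominator
`κ + x y` met by the second map of the left side, cleared of fractions. -/
def ybFactor (α β κ a b : ℂ) : ℂ := κ * (β + a) + b * (α + a)

theorem ybFactor_combine_mid (α₁ α₂ α₃ a b : ℂ) :
    α₂ * ybFactor α₁ α₂ α₁ a b + a * ybFactor α₁ α₂ α₃ a b =
      (α₂ + a) * ybFactor α₃ α₂ α₁ b a := by
  simp only [ybFactor]; ring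

theorem ybFactor_combine_last (α₁ α₂ α₃ a b : ℂ) :
    α₃ * ybFactor α₁ α₂ α₁ a b + a * ybFactor α₁ α₂ α₃ a b =
      (α₁ + a) * ybFactor α₃ α₂ α₃ b a := by
  simp only [ybFactor]; ring

noncomputable def ybValue (α₁ α₂ α₃ x₁ x₂ x₃ : ℂ) : ℂ × ℂ × ℂ :=
  let T κ := ybFactor α₁ α₂ κ (x₁ * x₂) (x₂ * x₃)
  let U κ := ybFactor α₃ α₂ κ (x₂ * x₃) (x₁ * x₂)
  (x₃ * T α₁ / T α₃, x₂ * T α₃ * U α₁ / (T α₁ * U α₃), x₁ * U α₃ / U α₁)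

def rev3 {X : Type*} (p : X × X × X) : X × X × X := (p.2.2, p.2.1, p.1)

theorem rev3_ybValue (α₁ α₂ α₃ x₁ x₂ x₃ : ℂ) :
    rev3 (ybValue α₃ α₂ α₁ x₃ x₂ x₁) = ybValue α₁ α₂ α₃ x₁ x₂ x₃ := by
  simp only [rev3, ybValue, mul_comm x₃ x₂, mul_comm x₂ x₁, Prod.mk.injEq, true_and, and_true]
  ring

theorem act12_act13_act23_eq_rev3 {X : Type*} (R₁₂ R₁₃ R₂₃ : X × X → X × X) (p : X × X × X) :
    act12 R₁₂ (act13 R₁₃ (act23 R₂₃ p)) =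
      rev3 (act23 (Prod.swap ∘ R₁₂ ∘ Prod.swap)
        (act13 (Prod.swap ∘ R₁₃ ∘ Prod.swap) (act12 (Prod.swap ∘ R₂₃ ∘ Prod.swap) (rev3 p)))) :=
  rfl

theorem act23_act13_act12_fIII {α₁ α₂ α₃ x₁ x₂ x₃ : ℂ} (h12 : fIIIok α₁ α₂ (x₁, x₂))
    (h13 : α₁ + (fIII α₁ α₂ (x₁, x₂)).1 * x₃ ≠ 0) :
    act23 (fIII α₂ α₃) (act13 (fIII α₁ α₃) (act12 (fIII α₁ α₂) (x₁, x₂, x₃))) =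
      ybValue α₁ α₂ α₃ x₁ x₂ x₃ := by
  obtain ⟨hB, hA⟩ : α₁ + x₁ * x₂ ≠ 0 ∧ α₂ + x₁ * x₂ ≠ 0 := h12
  have hprod₁₃ : (fIII α₁ α₂ (x₁, x₂)).1 * x₃ = x₂ * x₃ * (α₁ + x₁ * x₂) / (α₂ + x₁ * x₂) := by
    simp only [fIII]; ring
  have hT₁ : ybFactor α₁ α₂ α₁ (x₁ * x₂) (x₂ * x₃) ≠ 0 := by
    rw [hprod₁₃, add_div' _ _ _ hA] at h13
    exact (div_ne_zero_iff.mp h13).1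
  have step13 : act13 (fIII α₁ α₃) (act12 (fIII α₁ α₂) (x₁, x₂, x₃)) =
      (x₃ * ybFactor α₁ α₂ α₁ (x₁ * x₂) (x₂ * x₃) / ybFactor α₁ α₂ α₃ (x₁ * x₂) (x₂ * x₃),
        (fIII α₁ α₂ (x₁, x₂)).2,
        (fIII α₁ α₂ (x₁, x₂)).1 * ybFactor α₁ α₂ α₃ (x₁ * x₂) (x₂ * x₃) /
          ybFactor α₁ α₂ α₁ (x₁ * x₂) (x₂ * x₃)) := by
    simp only [act12, act13, fIII_eq_of_mul_eq_div hA hprod₁₃]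
    rfl
  have hprod₂₃ : (fIII α₁ α₂ (x₁, x₂)).2 * ((fIII α₁ α₂ (x₁, x₂)).1 *
      ybFactor α₁ α₂ α₃ (x₁ * x₂) (x₂ * x₃) / ybFactor α₁ α₂ α₁ (x₁ * x₂) (x₂ * x₃)) =
      x₁ * x₂ * ybFactor α₁ α₂ α₃ (x₁ * x₂) (x₂ * x₃) / ybFactor α₁ α₂ α₁ (x₁ * x₂) (x₂ * x₃) := by
    simp only [fIII]; field_simp
  rw [step13, act23]
  dsimp only
  rw [fIII_eq_of_mul_eq_div hT₁ hprod₂₃, ybFactor_combine_mid, ybFactor_combine_last]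
  simp only [ybValue, fIII]
  -- otherwise `field_simp` reorders `x₁ * x₂` and no longer recognizes `hA`, `hB`
  generalize x₁ * x₂ = a at hA hB ⊢
  congr 2 <;> field_simp

theorem act12_act13_act23_fIII {α₁ α₂ α₃ x₁ x₂ x₃ : ℂ} (h23 : fIIIok α₂ α₃ (x₂, x₃))
    (h13 : α₃ + x₁ * (fIII α₂ α₃ (x₂, x₃)).2 ≠ 0) :
    act12 (fIII α₁ α₂) (act13 (fIII α₁ α₃) (act23 (fIII α₂ α₃) (x₁, x₂, x₃))) =
      ybValue α₁ α₂ α₃ x₁ x₂ x₃ := by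
  rw [act12_act13_act23_eq_rev3, fIII_swap, fIII_swap, fIII_swap, ← rev3_ybValue]
  congr 1
  refine act23_act13_act12_fIII (fIIIok_swap.mpr h23) ?_
  rwa [← fIII_swap α₂ α₃, mul_comm]

theorem fIII_yangBaxter_general (α₁ α₂ α₃ x₁ x₂ x₃ : ℂ)
    (p1 p2 q1 q2 : ℂ × ℂ × ℂ)
    (hp1 : p1 = act12 (fIII α₁ α₂) (x₁, x₂, x₃))
    (hp2 : p2 = act13 (fIII α₁ α₃) p1)
    (hq1 : q1 = act23 (fIII α₂ α₃) (x₁, x₂, x₃))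
    (hq2 : q2 = act13 (fIII α₁ α₃) q1)
    (h1 : fIIIok α₁ α₂ (x₁, x₂))
    (h2 : fIIIok α₁ α₃ (p1.1, p1.2.2))
    (h4 : fIIIok α₂ α₃ (x₂, x₃))
    (h5 : fIIIok α₁ α₃ (q1.1, q1.2.2)) :
    act23 (fIII α₂ α₃) p2 = act12 (fIII α₁ α₂) q2 := by
  subst hp1 hp2 hq1 hq2
  exact (act23_act13_act12_fIII h1 h2.1).trans (act12_act13_act23_fIII h4 h5.2).symm

/-- The map family `fIII` satisfies the parametric Yang–Baxter equation wherever
all denominators encountered in both compositions are nonzero. -/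
theorem fIII_yangBaxter (α₁ α₂ α₃ x₁ x₂ x₃ : ℂ)
    (p1 p2 q1 q2 : ℂ × ℂ × ℂ)
    (hp1 : p1 = act12 (fIII α₁ α₂) (x₁, x₂, x₃))
    (hp2 : p2 = act13 (fIII α₁ α₃) p1)
    (hq1 : q1 = act23 (fIII α₂ α₃) (x₁, x₂, x₃))
    (hq2 : q2 = act13 (fIII α₁ α₃) q1)
    (h1 : fIIIok α₁ α₂ (x₁, x₂))
    (h2 : fIIIok α₁ α₃ (p1.1, p1.2.2))
    (h3 : fIIIok α₂ α₃ (p2.2.1, p2.2.2))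
    (h4 : fIIIok α₂ α₃ (x₂, x₃))
    (h5 : fIIIok α₁ α₃ (q1.1, q1.2.2))
    (h6 : fIIIok α₁ α₂ (q2.1, q2.2.1)) :
    act23 (fIII α₂ α₃) p2 = act12 (fIII α₁ α₂) q2 :=
  fIII_yangBaxter_general α₁ α₂ α₃ x₁ x₂ x₃ p1 p2 q1 q2 hp1 hp2 hq1 hq2 h1 h2 h4 h5
end

section
/- Let α₁, α₂, x₁, x₂ ∈ ℂ with α₁ + x₁x₂ ≠ 0 and α₂ + x₁x₂ ≠ 0, and set x₁' = x₂(α₁ + x₁x₂)/(α₂ + x₁x₂) and x₂' = x₁(α₂ + x₁x₂)/(α₁ + x₁x₂). Then for every λ ∈ ℂ, the 2×2 complex matrices satisfy L(x₂; α₂, λ) · L(x₁; α₁, λ) = L(x₁'; α₁, λ) · L(x₂'; α₂, λ), where L(x; α, λ) is the 2×2 matrix with rows (x², λx) and (x, α). -/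
/-!
The product `L(x; α, λ) L(y; β, λ)` depends on `x, y` only through `p = y x`, `x (β + p)` and
`y (α + p)`. The Yang–Baxter map keeps `p = x₁ x₂` fixed and is built so that
`x₁' (α₂ + p) = x₂ (α₁ + p)` and `x₂' (α₁ + p) = x₁ (α₂ + p)`, so the two products coincide.
-/

/-- The Lax matrix `L(x; α, λ)` with rows `(x², λx)` and `(x, α)`. -/
noncomputable def laxF (x α lam : ℂ) : Matrix (Fin 2) (Fin 2) ℂ :=
  !![x ^ 2, lam * x; x, α]

theorem laxF_mul_laxF (x α y β lam : ℂ) :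
    laxF x α lam * laxF y β lam =
      !![(y * x) ^ 2 + lam * (y * x), lam * (x * (β + y * x));
        y * (α + y * x), lam * (y * x) + α * β] := by
  rw [laxF, laxF, Matrix.mul_fin_two]
  ring_nf

theorem laxF_mul_laxF_eq_of_mul_eq {x α y β x' y' lam : ℂ} (hp : y' * x' = y * x)
    (hx : x' * (α + y * x) = x * (β + y * x)) (hy : y' * (β + y * x) = y * (α + y * x)) :
    laxF x α lam * laxF y β lam = laxF x' β lam * laxF y' α lam := by
  rw [laxF_mul_laxF, laxF_mul_laxF, hp, hx, hy, mul_comm β α]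

/-- The Yang–Baxter map `(x₁,x₂) ↦ (x₂(α₁+x₁x₂)/(α₂+x₁x₂), x₁(α₂+x₁x₂)/(α₁+x₁x₂))`
satisfies the Lax factorization `L(x₂;α₂,λ)L(x₁;α₁,λ) = L(x₁';α₁,λ)L(x₂';α₂,λ)`
for every spectral parameter `λ`. -/
theorem laxF_factorization (α₁ α₂ x₁ x₂ : ℂ)
    (h₁ : α₁ + x₁ * x₂ ≠ 0) (h₂ : α₂ + x₁ * x₂ ≠ 0)
    (x₁' x₂' : ℂ)
    (hx₁' : x₁' = x₂ * (α₁ + x₁ * x₂) / (α₂ + x₁ * x₂))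
    (hx₂' : x₂' = x₁ * (α₂ + x₁ * x₂) / (α₁ + x₁ * x₂)) :
    ∀ lam : ℂ,
      laxF x₂ α₂ lam * laxF x₁ α₁ lam = laxF x₁' α₁ lam * laxF x₂' α₂ lam := by
  intro lam
  apply laxF_mul_laxF_eq_of_mul_eq
  · rw [hx₁', hx₂', div_mul_div_comm, div_eq_iff (mul_ne_zero h₁ h₂)]
    ring
  · rw [hx₁', div_mul_cancel₀ _ h₂]
  · rw [hx₂', div_mul_cancel₀ _ h₁]
end

section
/- Let α₁, α₂ ∈ ℂ and x₁, x₂, x₁', x₂' ∈ ℂ with x₁ ≠ 0 and α₂ + x₁x₂ ≠ 0. If for every λ ∈ ℂ the 2×2 complex matrices satisfy L(x₂'; α₂, λ) · L(x₁'; α₁, λ) = L(x₂; α₂, λ) · L(x₁; α₁, λ), where L(x; α, λ) is the 2×2 matrix with rows (x², λx) and (x, α), then x₁' = x₁ and x₂' = x₂ (the 2-factorization property of the Lax matrix L). -/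
lemma laxF_mul_laxF_apply_one_zero (x y α β lam : ℂ) :
    (laxF y β lam * laxF x α lam) 1 0 = x * (y * x + β) := by
  simp only [laxF, Matrix.mul_fin_two, Matrix.of_apply, Matrix.cons_val_one, Matrix.cons_val_zero]
  ring

lemma laxF_mul_laxF_apply_one_one (x y α β lam : ℂ) :
    (laxF y β lam * laxF x α lam) 1 1 = lam * (y * x) + β * α := by
  simp only [laxF, Matrix.mul_fin_two, Matrix.of_apply, Matrix.cons_val_one, Matrix.cons_val_zero]
  ring

/-- The 2-factorization property of the Lax matrix `laxF`: equality of the products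
for all values of the spectral parameter forces `x₁' = x₁` and `x₂' = x₂`. -/
theorem laxF_twoFactorization (α₁ α₂ x₁ x₂ x₁' x₂' : ℂ)
    (hx₁ : x₁ ≠ 0) (h : α₂ + x₁ * x₂ ≠ 0)
    (hfact : ∀ lam : ℂ,
      laxF x₂' α₂ lam * laxF x₁' α₁ lam = laxF x₂ α₂ lam * laxF x₁ α₁ lam) :
    x₁' = x₁ ∧ x₂' = x₂ := by
  have hprod : x₂' * x₁' = x₂ * x₁ := by
    have h₁₁ := congrFun (congrFun (hfact 1) 1) 1
    simpa only [laxF_mul_laxF_apply_one_one, one_mul, add_left_inj] using h₁₁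
  have hx₁' : x₁' = x₁ := by
    have h₁₀ := congrFun (congrFun (hfact 0) 1) 0
    rw [laxF_mul_laxF_apply_one_zero, laxF_mul_laxF_apply_one_zero, hprod] at h₁₀
    refine mul_right_cancel₀ ?_ h₁₀
    rwa [mul_comm, add_comm]
  exact ⟨hx₁', mul_right_cancel₀ hx₁ (hx₁' ▸ hprod)⟩
end

section
/- The discrete Krichever–Novikov Yang–Baxter map is unitary: for every k ∈ ℂ, all points 𝐚 = (a,A), 𝐛 = (b,B) on the Jacobi quartic E_k = {(a,A) ∈ ℂ² : A² = a⁴ + k a² + 1}, and all (x,X), (y,Y) ∈ ℂ² such that all denominators encountered are nonzero, writing R_{(𝐚,𝐛)}((x,X),(y,Y)) = ((p,P),(q,Q)) with p = F(y,x,Y;𝐚,𝐛), P = Y, q = x, Q = F(X,x,Y;𝐚,𝐛), one has R_{(𝐛,𝐚)}((q,Q),(p,P)) = ((y,Y),(x,X)); equivalently F(p, q, P; 𝐛, 𝐚) = y and F(Q, q, P; 𝐛, 𝐚) = X. -/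
/-- Membership in the Jacobi quartic `E_k = {(a,A) : A² = a⁴ + k a² + 1}`. -/
def onJacobi (k : ℂ) (a : ℂ × ℂ) : Prop :=
  a.2 ^ 2 = a.1 ^ 4 + k * a.1 ^ 2 + 1

/-- The denominator of `F(x,y,z;𝐚,𝐛)` for the Krichever–Novikov map. -/
def denKN (x y z : ℂ) (a b : ℂ × ℂ) : ℂ :=
  (a.1 * b.2 - b.1 * a.2) * (a.1 * b.1 * y * z - 1) * x +
    (1 - a.1 ^ 2 * b.1 ^ 2) * (a.1 * z - b.1 * y)

/-- The function `F(x,y,z;𝐚,𝐛)` for the Krichever–Novikov map. -/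
noncomputable def Fkn (x y z : ℂ) (a b : ℂ × ℂ) : ℂ :=
  ((1 - a.1 ^ 2 * b.1 ^ 2) * (b.1 * z - a.1 * y) * x +
      (a.1 * b.2 - b.1 * a.2) * (y * z - a.1 * b.1)) / denKN x y z a b

/-- The discrete Krichever–Novikov Yang–Baxter map
`R_{(𝐚,𝐛)}((x,X),(y,Y)) = ((F(y,x,Y;𝐚,𝐛), Y), (x, F(X,x,Y;𝐚,𝐛)))`. -/
noncomputable def Rkn (a b : ℂ × ℂ) : (ℂ × ℂ) × (ℂ × ℂ) → (ℂ × ℂ) × (ℂ × ℂ) :=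
  fun uv => ((Fkn uv.2.1 uv.1.1 uv.2.2 a b, uv.2.2),
             (uv.1.1, Fkn uv.1.2 uv.1.1 uv.2.2 a b))

/-!
For fixed `y, z`, the map `x ↦ F(x,y,z;𝐚,𝐛)` is the Möbius transformation of a matrix `M`, and
exchanging `𝐚` and `𝐛` replaces `M` by its adjugate. Adjugate Möbius maps are mutually inverse
(`adj M * M = det M • 1`), so `F(F(x,y,z;𝐚,𝐛),y,z;𝐛,𝐚) = x`; both components of the unitarity
relation are instances of this.
-/

def moebius {K : Type*} [Field K] (α β γ δ x : K) : K :=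
  (α * x + β) / (γ * x + δ)

theorem moebius_adjugate_moebius {K : Type*} [Field K] {α β γ δ x : K}
    (hx : γ * x + δ ≠ 0) (hm : -γ * moebius α β γ δ x + α ≠ 0) :
    moebius δ (-β) (-γ) α (moebius α β γ δ x) = x := by
  have hnum : δ * moebius α β γ δ x + -β = (α * δ - β * γ) * x / (γ * x + δ) := by
    rw [moebius, eq_div_iff hx, add_mul, mul_assoc, div_mul_cancel₀ _ hx]
    ring
  have hden : -γ * moebius α β γ δ x + α = (α * δ - β * γ) / (γ * x + δ) := by
    rw [moebius, eq_div_iff hx, add_mul, mul_assoc, div_mul_cancel₀ _ hx]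
    ring
  have hdet : α * δ - β * γ ≠ 0 := by
    rw [hden] at hm
    exact (div_ne_zero_iff.mp hm).1
  rw [moebius, hnum, hden, div_div_div_cancel_right₀ hx, mul_div_cancel_left₀ x hdet]

theorem Fkn_eq_moebius (x y z : ℂ) (a b : ℂ × ℂ) :
    Fkn x y z a b =
      moebius ((1 - a.1 ^ 2 * b.1 ^ 2) * (b.1 * z - a.1 * y))
        ((a.1 * b.2 - b.1 * a.2) * (y * z - a.1 * b.1))
        ((a.1 * b.2 - b.1 * a.2) * (a.1 * b.1 * y * z - 1))
        ((1 - a.1 ^ 2 * b.1 ^ 2) * (a.1 * z - b.1 * y)) x :=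
  rfl

theorem Fkn_swap_eq_moebius (x y z : ℂ) (a b : ℂ × ℂ) :
    Fkn x y z b a =
      moebius ((1 - a.1 ^ 2 * b.1 ^ 2) * (a.1 * z - b.1 * y))
        (-((a.1 * b.2 - b.1 * a.2) * (y * z - a.1 * b.1)))
        (-((a.1 * b.2 - b.1 * a.2) * (a.1 * b.1 * y * z - 1)))
        ((1 - a.1 ^ 2 * b.1 ^ 2) * (b.1 * z - a.1 * y)) x := by
  rw [Fkn_eq_moebius]
  congr 1 <;> ring

theorem Fkn_swap_Fkn {x y z : ℂ} {a b : ℂ × ℂ} (hx : denKN x y z a b ≠ 0)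
    (hF : denKN (Fkn x y z a b) y z b a ≠ 0) :
    Fkn (Fkn x y z a b) y z b a = x := by
  rw [Fkn_swap_eq_moebius, Fkn_eq_moebius]
  refine moebius_adjugate_moebius (by rwa [denKN] at hx) ?_
  rw [← Fkn_eq_moebius]
  convert hF using 1
  rw [denKN]
  ring

theorem Rkn_unitary_general (a b : ℂ × ℂ)
    (x X y Y p P q Q : ℂ)
    (hp : p = Fkn y x Y a b) (hP : P = Y) (hq : q = x) (hQ : Q = Fkn X x Y a b)
    (h1 : denKN y x Y a b ≠ 0) (h2 : denKN X x Y a b ≠ 0)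
    (h3 : denKN p q P b a ≠ 0) (h4 : denKN Q q P b a ≠ 0) :
    Rkn b a ((q, Q), (p, P)) = ((y, Y), (x, X)) := by
  subst hp hP hq hQ
  simp only [Rkn, Fkn_swap_Fkn h1 h3, Fkn_swap_Fkn h2 h4]

/-- The discrete Krichever–Novikov Yang–Baxter map is unitary:
`R_{(𝐛,𝐚)}((q,Q),(p,P)) = ((y,Y),(x,X))`. -/
theorem Rkn_unitary (k : ℂ) (a b : ℂ × ℂ)
    (ha : onJacobi k a) (hb : onJacobi k b)
    (x X y Y p P q Q : ℂ)
    (hp : p = Fkn y x Y a b) (hP : P = Y) (hq : q = x) (hQ : Q = Fkn X x Y a b)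
    (h1 : denKN y x Y a b ≠ 0) (h2 : denKN X x Y a b ≠ 0)
    (h3 : denKN p q P b a ≠ 0) (h4 : denKN Q q P b a ≠ 0) :
    Rkn b a ((q, Q), (p, P)) = ((y, Y), (x, X)) :=
  Rkn_unitary_general a b x X y Y p P q Q hp hP hq hQ h1 h2 h3 h4
end

section
/- The discrete Landau–Lifshits Yang–Baxter map is unitary: for all α, β ∈ ℂ, all points 𝐚 = (a,A), 𝐛 = (b,B) on the Weierstrass curve E = {(χ,𝒳) ∈ ℂ² : 𝒳² + χ³ + αχ + β = 0} with a, b ≠ 0 and a ≠ b, and all (x,X), (y,Y) ∈ ℂ² such that every denominator encountered is nonzero, writing R_{(𝐚,𝐛)}((x,X),(y,Y)) = ((p,P),(q,Q)) with p = F₁(y,x,Y;𝐚,𝐛), P = Y, q = x, Q = F₂(X,x,Y;𝐚,𝐛), one has R_{(𝐛,𝐚)}((q,Q),(p,P)) = ((y,Y),(x,X)); equivalently F₁(p, q, P; 𝐛, 𝐚) = y and F₂(Q, q, P; 𝐛, 𝐚) = X. -/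
set_option linter.unusedVariables false

/-- Membership in the Weierstrass curve `E = {(χ,𝒳) : 𝒳² + χ³ + αχ + β = 0}`. -/
def onW (α β : ℂ) (p : ℂ × ℂ) : Prop :=
  p.2 ^ 2 + p.1 ^ 3 + α * p.1 + β = 0

/-- `s_m = B·a^{m−1} + A·b^{m−1}` for `𝐚 = (a,A)`, `𝐛 = (b,B)`. -/
noncomputable def sLL (a b : ℂ × ℂ) (m : ℕ) : ℂ :=
  b.2 * a.1 ^ ((m : ℤ) - 1) + a.2 * b.1 ^ ((m : ℤ) - 1)

/-- `K(y,z) − N(y,z)`. -/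
noncomputable def diffLL (α β : ℂ) (a b : ℂ × ℂ) (y z : ℂ) : ℂ :=
  2 * sLL a b 2 * y * z - (α * sLL a b 1 + sLL a b 3) * (y - z)
    - 2 * α * sLL a b 2 - 4 * β * sLL a b 1

/-- `K(y,z) + N(y,z)`. -/
noncomputable def sumLL (α β : ℂ) (a b : ℂ × ℂ) (y z : ℂ) : ℂ :=
  (y + z) * (a.1 * b.1 * (α * sLL a b 0 + 3 * sLL a b 2)
    + 4 * β * sLL a b 1 + 3 * α * sLL a b 2 + sLL a b 4) / (a.1 - b.1)

/-- `K(y,z)`. -/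
noncomputable def Kll (α β : ℂ) (a b : ℂ × ℂ) (y z : ℂ) : ℂ :=
  (sumLL α β a b y z + diffLL α β a b y z) / 2

/-- `N(y,z)`. -/
noncomputable def Nll (α β : ℂ) (a b : ℂ × ℂ) (y z : ℂ) : ℂ :=
  (sumLL α β a b y z - diffLL α β a b y z) / 2

/-- `L(y,z)`. -/
noncomputable def Lll (α β : ℂ) (a b : ℂ × ℂ) (y z : ℂ) : ℂ :=
  sLL a b 3 * y * z + (α * sLL a b 2 + 2 * β * sLL a b 1) * (y - z)
    + 4 * β * sLL a b 2 - α ^ 2 * sLL a b 1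

/-- `M(y,z)`. -/
noncomputable def Mll (α β : ℂ) (a b : ℂ × ℂ) (y z : ℂ) : ℂ :=
  sLL a b 1 * y * z + sLL a b 2 * (y - z) - sLL a b 3

/-- `F₁(x,y,z;𝐚,𝐛) = (K(y,z)x − L(y,z))/(M(y,z)x + N(y,z))`. -/
noncomputable def F1ll (α β : ℂ) (a b : ℂ × ℂ) (x y z : ℂ) : ℂ :=
  (Kll α β a b y z * x - Lll α β a b y z) / (Mll α β a b y z * x + Nll α β a b y z)

/-- `F₂(x,y,z;𝐚,𝐛) = (K(y,z)x + L(y,z))/(−M(y,z)x + N(y,z))`. -/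
noncomputable def F2ll (α β : ℂ) (a b : ℂ × ℂ) (x y z : ℂ) : ℂ :=
  (Kll α β a b y z * x + Lll α β a b y z) / (-(Mll α β a b y z) * x + Nll α β a b y z)

/-- The discrete Landau–Lifshits Yang–Baxter map
`R_{(𝐚,𝐛)}((x,X),(y,Y)) = ((F₁(y,x,Y;𝐚,𝐛), Y), (x, F₂(X,x,Y;𝐚,𝐛)))`. -/
noncomputable def Rll (α β : ℂ) (a b : ℂ × ℂ) :
    (ℂ × ℂ) × (ℂ × ℂ) → (ℂ × ℂ) × (ℂ × ℂ) :=
  fun uv => ((F1ll α β a b uv.2.1 uv.1.1 uv.2.2, uv.2.2),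
             (uv.1.1, F2ll α β a b uv.1.2 uv.1.1 uv.2.2))

/-!
Swapping `𝐚` and `𝐛` leaves every `s_m`, hence `K − N`, `L` and `M`, unchanged, while
`K + N` changes sign through the factor `1/(a − b)`. So `K ↦ −N`, `N ↦ −K`, and the Möbius matrices
`[[K, −L], [M, N]]` and `[[K, L], [−M, N]]` of `F₁` and `F₂` become the negatives of their adjugates,
which act as the inverse Möbius transformations.
-/

section Mobius

variable {F : Type*} [Field F]

/-- The Möbius transformation of the matrix `[[a, b], [c, d]]`. -/
def mobius (a b c d x : F) : F :=
  (a * x + b) / (c * x + d)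

theorem mobius_neg_adjugate_mobius {a b c d y : F} (hy : c * y + d ≠ 0)
    (hp : c * mobius a b c d y + -a ≠ 0) :
    mobius (-d) b c (-a) (mobius a b c d y) = y := by
  have key : mobius a b c d y * (c * y + d) = a * y + b := div_mul_cancel₀ _ hy
  rw [mobius, div_eq_iff hp]
  linear_combination -key

end Mobius

section Swap

variable (α β : ℂ) (a b : ℂ × ℂ) (y z : ℂ)

theorem sLL_swap (m : ℕ) : sLL b a m = sLL a b m := by
  unfold sLL; ring

theorem diffLL_swap : diffLL α β b a y z = diffLL α β a b y z := by
  simp only [diffLL, sLL_swap]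

theorem sumLL_swap : sumLL α β b a y z = -sumLL α β a b y z := by
  simp only [sumLL, sLL_swap, ← neg_sub a.1 b.1, div_neg]
  ring

theorem Lll_swap : Lll α β b a y z = Lll α β a b y z := by
  simp only [Lll, sLL_swap]

theorem Mll_swap : Mll α β b a y z = Mll α β a b y z := by
  simp only [Mll, sLL_swap]

theorem Kll_swap : Kll α β b a y z = -Nll α β a b y z := by
  rw [Kll, Nll, sumLL_swap, diffLL_swap]; ring

theorem Nll_swap : Nll α β b a y z = -Kll α β a b y z := by
  rw [Kll, Nll, sumLL_swap, diffLL_swap]; ring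

theorem F1ll_eq_mobius (x : ℂ) :
    F1ll α β a b x y z = mobius (Kll α β a b y z) (-Lll α β a b y z) (Mll α β a b y z)
      (Nll α β a b y z) x := by
  simp only [F1ll, mobius, sub_eq_add_neg]

theorem F2ll_eq_mobius (x : ℂ) :
    F2ll α β a b x y z = mobius (Kll α β a b y z) (Lll α β a b y z) (-Mll α β a b y z)
      (Nll α β a b y z) x := by
  simp only [F2ll, mobius]

theorem F1ll_swap_F1ll {x : ℂ} (hx : Mll α β a b y z * x + Nll α β a b y z ≠ 0)
    (hp : Mll α β b a y z * F1ll α β a b x y z + Nll α β b a y z ≠ 0) :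
    F1ll α β b a (F1ll α β a b x y z) y z = x := by
  rw [Mll_swap, Nll_swap α β a b, F1ll_eq_mobius] at hp
  rw [F1ll_eq_mobius α β b a, Kll_swap α β a b, Lll_swap, Mll_swap, Nll_swap α β a b,
    F1ll_eq_mobius]
  exact mobius_neg_adjugate_mobius hx hp

theorem F2ll_swap_F2ll {x : ℂ} (hx : -Mll α β a b y z * x + Nll α β a b y z ≠ 0)
    (hq : -Mll α β b a y z * F2ll α β a b x y z + Nll α β b a y z ≠ 0) :
    F2ll α β b a (F2ll α β a b x y z) y z = x := by
  rw [Mll_swap, Nll_swap α β a b, F2ll_eq_mobius] at hq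
  rw [F2ll_eq_mobius α β b a, Kll_swap α β a b, Lll_swap, Mll_swap, Nll_swap α β a b,
    F2ll_eq_mobius]
  exact mobius_neg_adjugate_mobius hx hq

end Swap

theorem Rll_unitary_general (α β : ℂ) (a b : ℂ × ℂ)
    (x X y Y p P q Q : ℂ)
    (hp : p = F1ll α β a b y x Y) (hP : P = Y)
    (hq : q = x) (hQ : Q = F2ll α β a b X x Y)
    (h1 : Mll α β a b x Y * y + Nll α β a b x Y ≠ 0)
    (h2 : -(Mll α β a b x Y) * X + Nll α β a b x Y ≠ 0)
    (h3 : Mll α β b a q P * p + Nll α β b a q P ≠ 0)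
    (h4 : -(Mll α β b a q P) * Q + Nll α β b a q P ≠ 0) :
    Rll α β b a ((q, Q), (p, P)) = ((y, Y), (x, X)) := by
  subst p P q Q
  simp only [Rll, F1ll_swap_F1ll α β a b x Y h1 h3, F2ll_swap_F2ll α β a b x Y h2 h4]

/-- The discrete Landau–Lifshits Yang–Baxter map is unitary:
`R_{(𝐛,𝐚)}((q,Q),(p,P)) = ((y,Y),(x,X))`. -/
theorem Rll_unitary (α β : ℂ) (a b : ℂ × ℂ)
    (ha : onW α β a) (hb : onW α β b)
    (ha0 : a.1 ≠ 0) (hb0 : b.1 ≠ 0) (hab : a.1 ≠ b.1)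
    (x X y Y p P q Q : ℂ)
    (hp : p = F1ll α β a b y x Y) (hP : P = Y)
    (hq : q = x) (hQ : Q = F2ll α β a b X x Y)
    (h1 : Mll α β a b x Y * y + Nll α β a b x Y ≠ 0)
    (h2 : -(Mll α β a b x Y) * X + Nll α β a b x Y ≠ 0)
    (h3 : Mll α β b a q P * p + Nll α β b a q P ≠ 0)
    (h4 : -(Mll α β b a q P) * Q + Nll α β b a q P ≠ 0) :
    Rll α β b a ((q, Q), (p, P)) = ((y, Y), (x, X)) :=
  Rll_unitary_general α β a b x X y Y p P q Q hp hP hq hQ h1 h2 h3 h4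
end
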